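/- Decomposition of node balancing into subnetworks: Let N be a reaction network with disjoint reaction subsets R_1,…,R_ℓ, complementary subset R_{ℓ+1}, inducing subnetworks N_1,…,N_{ℓ+1}; let G be a reaction graph of N, G_{N_i} the induced reaction graphs of the N_i, and G' the induced disjoint-union reaction graph. Then for x* ∈ ℝ^n_{≥0} the following are equivalent: (i) x* is node balanced for N w.r.t. G and its projections are node balanced for N_i w.r.t. G_{N_i} for i = 1,…,ℓ; (ii) x* is node balanced for N w.r.t. G'; (iii) the projections of x* are node balanced for N_i w.r.t. G_{N_i} for all i = 1,…,ℓ+1. -/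

import Mathlib

open scoped Classical

/-- A reaction graph associated with a reaction network with `n` species and `p` reactions:
nodes labeled by complexes, edges in bijection with reactions (edges are indexed by `Fin p`). -/
structure ReactionGraph (n p : ℕ) where
  m : ℕ
  src : Fin p → Fin m
  tgt : Fin p → Fin m
  Y : Fin m → Fin n → ℕ
  noIsolated : ∀ i : Fin m, ∃ e : Fin p, src e = i ∨ tgt e = i
  noSelf : ∀ e : Fin p, Y (src e) ≠ Y (tgt e)
  edgeLabelInj : ∀ e e' : Fin p, Y (src e) = Y (src e') → Y (tgt e) = Y (tgt e') → e = e'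

namespace ReactionGraph

variable {n p : ℕ}

/-- Incidence matrix. -/
noncomputable def inc (G : ReactionGraph n p) : Matrix (Fin G.m) (Fin p) ℝ :=
  fun i e => (if G.tgt e = i then (1 : ℝ) else 0) - (if G.src e = i then (1 : ℝ) else 0)

/-- Labeling matrix. -/
noncomputable def lab (G : ReactionGraph n p) : Matrix (Fin n) (Fin G.m) ℝ :=
  fun i k => (G.Y k i : ℝ)

/-- Stoichiometric matrix of the underlying network. -/
noncomputable def stoich (G : ReactionGraph n p) : Matrix (Fin n) (Fin p) ℝ :=
  fun i e => (G.Y (G.tgt e) i : ℝ) - (G.Y (G.src e) i : ℝ)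

/-- Undirected adjacency. -/
def Adj (G : ReactionGraph n p) (i k : Fin G.m) : Prop :=
  ∃ e : Fin p, (G.src e = i ∧ G.tgt e = k) ∨ (G.src e = k ∧ G.tgt e = i)

/-- Connectivity: same connected component. -/
def Conn (G : ReactionGraph n p) : Fin G.m → Fin G.m → Prop :=
  Relation.EqvGen G.Adj

/-- Directed reachability. -/
def Reach (G : ReactionGraph n p) : Fin G.m → Fin G.m → Prop :=
  Relation.ReflTransGen (fun i k => ∃ e : Fin p, G.src e = i ∧ G.tgt e = k)

/-- Every connected component is strongly connected. -/
def WeaklyReversible (G : ReactionGraph n p) : Prop :=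
  ∀ i k, G.Conn i k → G.Reach i k

noncomputable def connSetoid (G : ReactionGraph n p) : Setoid (Fin G.m) :=
  ⟨G.Conn, Relation.EqvGen.is_equivalence _⟩

/-- Number of connected components. -/
noncomputable def numComponents (G : ReactionGraph n p) : ℕ :=
  Nat.card (Quotient G.connSetoid)

/-- Deficiency `m_G - ℓ_G - s`. -/
noncomputable def deficiency (G : ReactionGraph n p) : ℤ :=
  (G.m : ℤ) - G.numComponents - G.stoich.rank

/-- Morphism of reaction graphs: maps edges to edges and preserves labels. -/
structure Morphism (G G' : ReactionGraph n p) where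
  toFun : Fin G.m → Fin G'.m
  map_edge : ∀ e : Fin p, ∃ e' : Fin p,
    G'.src e' = toFun (G.src e) ∧ G'.tgt e' = toFun (G.tgt e)
  map_label : ∀ i, G'.Y (toFun i) = G.Y i

/-- Mass-action monomial `x^y`. -/
noncomputable def monomial (x : Fin n → ℝ) (y : Fin n → ℕ) : ℝ := ∏ i, x i ^ y i

/-- Mass-action kinetics rate vector determined by rate constants `κ`. -/
noncomputable def massAction (G : ReactionGraph n p) (κ : Fin p → ℝ) (x : Fin n → ℝ) :
    Fin p → ℝ :=
  fun e => κ e * monomial x (G.Y (G.src e))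

/-- Positive vector. -/
def Pos {n : ℕ} (x : Fin n → ℝ) : Prop := ∀ i, 0 < x i

/-- `t` is a spanning tree of the connected component of `i`, rooted at `i`:
every other node of the component has exactly one outgoing edge, and iterating
edges strictly decreases a depth function (no cycles). -/
def IsSpanningTree (G : ReactionGraph n p) (i : Fin G.m) (t : Fin G.m → Option (Fin p)) :
    Prop :=
  t i = none ∧
  (∀ k, k ≠ i → G.Conn i k → ∃ e, t k = some e) ∧
  (∀ k e, t k = some e → G.src e = k ∧ G.Conn i k ∧ k ≠ i) ∧
  ∃ d : Fin G.m → ℕ, ∀ k e, t k = some e → d (G.tgt e) < d k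

/-- Tree constant `K_{G,i}`: sum over spanning trees rooted at `i` of the products of rate
constants of the tree's edges. -/
noncomputable def K (G : ReactionGraph n p) (κ : Fin p → ℝ) (i : Fin G.m) : ℝ :=
  ∑ t : {t : Fin G.m → Option (Fin p) // G.IsSpanningTree i t},
    ∏ k : Fin G.m, (t.val k).elim 1 κ

/-- The matrix of the linear map `Ψ_G` (labeling map together with componentwise sums). -/
noncomputable def psiMat (G : ReactionGraph n p) : Matrix (Fin n ⊕ Fin G.m) (Fin G.m) ℝ :=
  fun r k => match r with
    | Sum.inl i => (G.Y k i : ℝ)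
    | Sum.inr i₀ => if G.Conn i₀ k then 1 else 0

noncomputable def kerPsi (G : ReactionGraph n p) : Submodule ℝ (Fin G.m → ℝ) :=
  LinearMap.ker G.psiMat.mulVecLin

end ReactionGraph

/-!
Cut `G'` along the blocks of `part`: since distinct blocks share no node of `G'` and `G'` has no
isolated nodes, every node `k'` of `G'` belongs to exactly one block, and within a block `φ` is
injective on nodes. So the edges entering (leaving) `k'` are exactly the edges of its block
entering (leaving) `φ k'` in `G`, which turns node balance w.r.t. `G'` into the node balance of
every subnetwork; a pair (block, node of `G`) not of the form (block of `k'`, `φ k'`) carries no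
edges at all. Summing the subnetwork balances over the blocks gives node balance w.r.t. `G`, and
conversely the balance of the last block is what remains of the balance w.r.t. `G` once those
of the other blocks are subtracted.
-/

open Finset

namespace ReactionGraph

variable {n p : ℕ} {ι M : Type*}

def Incident (H : ReactionGraph n p) (e : Fin p) (k : Fin H.m) : Prop :=
  H.src e = k ∨ H.tgt e = k

def IsNodeBalanced [AddCommMonoid M] (H : ReactionGraph n p) (v : Fin p → M) : Prop :=
  ∀ k, ∑ e ∈ univ.filter (fun e => H.tgt e = k), v e =
    ∑ e ∈ univ.filter (fun e => H.src e = k), v e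

/-- Node balance of the subnetwork `N_i` w.r.t. `G_{N_i}`, whose nodes are read as nodes of `G`. -/
def IsBlockBalanced [DecidableEq ι] [AddCommMonoid M] (G : ReactionGraph n p)
    (part : Fin p → ι) (i : ι) (v : Fin p → M) : Prop :=
  ∀ k, ∑ e ∈ univ.filter (fun e => part e = i ∧ G.tgt e = k), v e =
    ∑ e ∈ univ.filter (fun e => part e = i ∧ G.src e = k), v e

section Blocks

variable [Fintype ι] [DecidableEq ι]

theorem sum_filter_eq_sum_sum_filter [AddCommMonoid M] (part : Fin p → ι) (P : Fin p → Prop)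
    [DecidablePred P] (v : Fin p → M) :
    ∑ e ∈ univ.filter P, v e = ∑ i, ∑ e ∈ univ.filter (fun e => part e = i ∧ P e), v e := by
  rw [← sum_fiberwise (univ.filter P) part v]
  refine sum_congr rfl fun i _ => sum_congr ?_ fun _ _ => rfl
  ext e
  simp only [mem_filter, mem_univ, true_and, and_comm]

theorem isNodeBalanced_of_forall_isBlockBalanced [AddCommMonoid M] {G : ReactionGraph n p}
    {part : Fin p → ι} {v : Fin p → M} (h : ∀ i, G.IsBlockBalanced part i v) :
    G.IsNodeBalanced v := fun k => by
  rw [sum_filter_eq_sum_sum_filter part, sum_filter_eq_sum_sum_filter part]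
  exact sum_congr rfl fun i _ => h i k

theorem isBlockBalanced_of_isNodeBalanced [AddCancelCommMonoid M] {G : ReactionGraph n p}
    {part : Fin p → ι} {v : Fin p → M} (hG : G.IsNodeBalanced v) {j : ι}
    (h : ∀ i ≠ j, G.IsBlockBalanced part i v) : G.IsBlockBalanced part j v := fun k => by
  have hk := hG k
  rw [sum_filter_eq_sum_sum_filter part, sum_filter_eq_sum_sum_filter part,
    ← add_sum_erase _ _ (mem_univ j), ← add_sum_erase _ _ (mem_univ j),
    sum_congr rfl fun i hi => h i (ne_of_mem_erase hi) k] at hk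
  exact add_right_cancel hk

theorem isNodeBalanced_and_forall_ne_iff [AddCancelCommMonoid M] (G : ReactionGraph n p)
    (part : Fin p → ι) (v : Fin p → M) (j : ι) :
    (G.IsNodeBalanced v ∧ ∀ i ≠ j, G.IsBlockBalanced part i v) ↔
      ∀ i, G.IsBlockBalanced part i v := by
  refine ⟨fun ⟨hG, h⟩ i => ?_, fun h => ⟨isNodeBalanced_of_forall_isBlockBalanced h,
    fun i _ => h i⟩⟩
  by_cases hi : i = j
  · exact hi ▸ isBlockBalanced_of_isNodeBalanced hG h
  · exact h i hi

end Blocks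

/-- `G'` is the disjoint union of the subgraphs of `G` spanned by the blocks of `part`, and `φ`
glues it back onto `G`. -/
structure IsBlockDisjointUnion (G G' : ReactionGraph n p) (part : Fin p → ι)
    (φ : Fin G'.m → Fin G.m) : Prop where
  map_src : ∀ e, φ (G'.src e) = G.src e
  map_tgt : ∀ e, φ (G'.tgt e) = G.tgt e
  lift_eq : ∀ e e', part e = part e' →
    (G.src e = G.src e' → G'.src e = G'.src e') ∧
    (G.src e = G.tgt e' → G'.src e = G'.tgt e') ∧
    (G.tgt e = G.src e' → G'.tgt e = G'.src e') ∧
    (G.tgt e = G.tgt e' → G'.tgt e = G'.tgt e')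
  separated : ∀ e e', part e ≠ part e' →
    G'.src e ≠ G'.src e' ∧ G'.src e ≠ G'.tgt e' ∧
    G'.tgt e ≠ G'.src e' ∧ G'.tgt e ≠ G'.tgt e'

namespace IsBlockDisjointUnion

variable {G G' : ReactionGraph n p} {part : Fin p → ι} {φ : Fin G'.m → Fin G.m}

theorem part_eq_of_incident (hU : IsBlockDisjointUnion G G' part φ) {e e' : Fin p}
    {k : Fin G'.m} (he : G'.Incident e k) (he' : G'.Incident e' k) : part e = part e' := by
  by_contra hne
  obtain ⟨hss, hst, hts, htt⟩ := hU.separated e e' hne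
  rcases he with rfl | rfl <;> rcases he' with h | h
  exacts [hss h.symm, hst h.symm, hts h.symm, htt h.symm]

theorem eq_of_map_eq (hU : IsBlockDisjointUnion G G' part φ) {e e' : Fin p} {k k' : Fin G'.m}
    (hp : part e = part e') (he : G'.Incident e k) (he' : G'.Incident e' k')
    (hφ : φ k = φ k') : k = k' := by
  obtain ⟨hss, hst, hts, htt⟩ := hU.lift_eq e e' hp
  rcases he with rfl | rfl <;> rcases he' with rfl | rfl <;>
    simp only [hU.map_src, hU.map_tgt] at hφ
  exacts [hss hφ, hst hφ, hts hφ, htt hφ]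

theorem exists_incident_map_eq (hU : IsBlockDisjointUnion G G' part φ) {e : Fin p}
    {k : Fin G.m} (he : G.Incident e k) : ∃ k', G'.Incident e k' ∧ φ k' = k := by
  rcases he with rfl | rfl
  exacts [⟨G'.src e, Or.inl rfl, hU.map_src e⟩, ⟨G'.tgt e, Or.inr rfl, hU.map_tgt e⟩]

theorem filter_eq_filter_part_eq [DecidableEq ι] (hU : IsBlockDisjointUnion G G' part φ)
    (a' : Fin p → Fin G'.m) (a : Fin p → Fin G.m) (ha' : ∀ e, G'.Incident e (a' e))
    (hφa : ∀ e, φ (a' e) = a e) ⦃e₀ : Fin p⦄ ⦃k' : Fin G'.m⦄ (h₀ : G'.Incident e₀ k') :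
    univ.filter (fun e => a' e = k') = univ.filter (fun e => part e = part e₀ ∧ a e = φ k') := by
  ext e
  simp only [mem_filter, mem_univ, true_and]
  constructor
  · rintro rfl
    exact ⟨hU.part_eq_of_incident (ha' e) h₀, (hφa e).symm⟩
  · rintro ⟨hp, hk⟩
    exact hU.eq_of_map_eq hp (ha' e) h₀ (by rw [hφa, hk])

theorem isNodeBalanced_iff_forall_isBlockBalanced [DecidableEq ι] [AddCommMonoid M]
    (hU : IsBlockDisjointUnion G G' part φ) (v : Fin p → M) :
    G'.IsNodeBalanced v ↔ ∀ i, G.IsBlockBalanced part i v := by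
  have filter_tgt := hU.filter_eq_filter_part_eq G'.tgt G.tgt (fun _ => Or.inr rfl) hU.map_tgt
  have filter_src := hU.filter_eq_filter_part_eq G'.src G.src (fun _ => Or.inl rfl) hU.map_src
  constructor
  · intro h i k
    by_cases hk : ∃ e₀, part e₀ = i ∧ G.Incident e₀ k
    · obtain ⟨e₀, rfl, he₀⟩ := hk
      obtain ⟨k', hk', rfl⟩ := hU.exists_incident_map_eq he₀
      rw [← filter_tgt hk', ← filter_src hk']
      exact h k'
    · simp only [not_exists, not_and] at hk
      rw [filter_false_of_mem fun e _ ⟨hi, he⟩ => hk e hi (Or.inr he),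
        filter_false_of_mem fun e _ ⟨hi, he⟩ => hk e hi (Or.inl he)]
  · intro h k'
    obtain ⟨e₀, h₀⟩ := G'.noIsolated k'
    rw [filter_tgt h₀, filter_src h₀]
    exact h _ _

end IsBlockDisjointUnion

end ReactionGraph

open ReactionGraph in
theorem decomposition_node_balanced_general {n p ℓ : ℕ} (G G' : ReactionGraph n p)
    (part : Fin p → Fin (ℓ + 1))
    (φ : Fin G'.m → Fin G.m)
    (hs : ∀ e, φ (G'.src e) = G.src e) (ht : ∀ e, φ (G'.tgt e) = G.tgt e)
    (hblock : ∀ e e', part e = part e' →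
      (G.src e = G.src e' → G'.src e = G'.src e') ∧
      (G.src e = G.tgt e' → G'.src e = G'.tgt e') ∧
      (G.tgt e = G.src e' → G'.tgt e = G'.src e') ∧
      (G.tgt e = G.tgt e' → G'.tgt e = G'.tgt e'))
    (hsep : ∀ e e', part e ≠ part e' →
      G'.src e ≠ G'.src e' ∧ G'.src e ≠ G'.tgt e' ∧
      G'.tgt e ≠ G'.src e' ∧ G'.tgt e ≠ G'.tgt e')
    (κ : Fin p → ℝ) (x : Fin n → ℝ) :
    -- (i) ↔ (ii) and (ii) ↔ (iii)
    (((∀ k : Fin G.m,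
          ∑ e ∈ Finset.univ.filter (fun e => G.tgt e = k), G.massAction κ x e =
            ∑ e ∈ Finset.univ.filter (fun e => G.src e = k), G.massAction κ x e) ∧
        (∀ i : Fin (ℓ + 1), i ≠ Fin.last ℓ → ∀ k : Fin G.m,
          ∑ e ∈ Finset.univ.filter (fun e => part e = i ∧ G.tgt e = k),
              G.massAction κ x e =
            ∑ e ∈ Finset.univ.filter (fun e => part e = i ∧ G.src e = k),
              G.massAction κ x e)) ↔
      (∀ k : Fin G'.m,
          ∑ e ∈ Finset.univ.filter (fun e => G'.tgt e = k), G.massAction κ x e =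
            ∑ e ∈ Finset.univ.filter (fun e => G'.src e = k), G.massAction κ x e)) ∧
    ((∀ k : Fin G'.m,
          ∑ e ∈ Finset.univ.filter (fun e => G'.tgt e = k), G.massAction κ x e =
            ∑ e ∈ Finset.univ.filter (fun e => G'.src e = k), G.massAction κ x e) ↔
      (∀ i : Fin (ℓ + 1), ∀ k : Fin G.m,
          ∑ e ∈ Finset.univ.filter (fun e => part e = i ∧ G.tgt e = k),
              G.massAction κ x e =
            ∑ e ∈ Finset.univ.filter (fun e => part e = i ∧ G.src e = k),
              G.massAction κ x e)) := by
  have hU : IsBlockDisjointUnion G G' part φ := ⟨hs, ht, hblock, hsep⟩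
  have ii_iff_iii := hU.isNodeBalanced_iff_forall_isBlockBalanced (G.massAction κ x)
  exact ⟨(isNodeBalanced_and_forall_ne_iff G part _ (Fin.last ℓ)).trans ii_iff_iii.symm,
    ii_iff_iii⟩

open ReactionGraph in
/-- decomposition into subnetworks: let `part : Fin p → Fin (ℓ+1)` split the
reactions into the disjoint subsets `R_1, …, R_ℓ` and the complementary subset `R_{ℓ+1}`
(the last index).  Let `G` be a reaction graph of `N` and `G'` the induced disjoint-union
reaction graph: `G ⪯ G'` via `φ`, which maps the endpoints of each edge of `G'` to the
corresponding endpoints in `G`, identifies no two nodes met by edges of the same block,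
and nodes met by edges of different blocks are distinct in `G'`.  Under mass-action
kinetics, for a nonnegative state `x*` the following are equivalent:
(i) `x*` is node balanced w.r.t. `G` and each subnetwork `N_i`, `i ≤ ℓ`, is balanced
(block-wise balance at every node, which is node balancing of the projection of `x*`
w.r.t. `G_{N_i}`);
(ii) `x*` is node balanced w.r.t. `G'`;
(iii) every subnetwork `N_i`, `i = 1, …, ℓ+1`, is balanced. -/
theorem decomposition_node_balanced {n p ℓ : ℕ} (G G' : ReactionGraph n p)
    (part : Fin p → Fin (ℓ + 1))
    (φ : Fin G'.m → Fin G.m)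
    (hs : ∀ e, φ (G'.src e) = G.src e) (ht : ∀ e, φ (G'.tgt e) = G.tgt e)
    (hlab : ∀ k, G.Y (φ k) = G'.Y k)
    (hblock : ∀ e e', part e = part e' →
      (G.src e = G.src e' → G'.src e = G'.src e') ∧
      (G.src e = G.tgt e' → G'.src e = G'.tgt e') ∧
      (G.tgt e = G.src e' → G'.tgt e = G'.src e') ∧
      (G.tgt e = G.tgt e' → G'.tgt e = G'.tgt e'))
    (hsep : ∀ e e', part e ≠ part e' →
      G'.src e ≠ G'.src e' ∧ G'.src e ≠ G'.tgt e' ∧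
      G'.tgt e ≠ G'.src e' ∧ G'.tgt e ≠ G'.tgt e')
    (κ : Fin p → ℝ) (hκ : ∀ e, 0 < κ e)
    (x : Fin n → ℝ) (hx : ∀ i, 0 ≤ x i) :
    -- (i) ↔ (ii) and (ii) ↔ (iii)
    (((∀ k : Fin G.m,
          ∑ e ∈ Finset.univ.filter (fun e => G.tgt e = k), G.massAction κ x e =
            ∑ e ∈ Finset.univ.filter (fun e => G.src e = k), G.massAction κ x e) ∧
        (∀ i : Fin (ℓ + 1), i ≠ Fin.last ℓ → ∀ k : Fin G.m,
          ∑ e ∈ Finset.univ.filter (fun e => part e = i ∧ G.tgt e = k),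
              G.massAction κ x e =
            ∑ e ∈ Finset.univ.filter (fun e => part e = i ∧ G.src e = k),
              G.massAction κ x e)) ↔
      (∀ k : Fin G'.m,
          ∑ e ∈ Finset.univ.filter (fun e => G'.tgt e = k), G.massAction κ x e =
            ∑ e ∈ Finset.univ.filter (fun e => G'.src e = k), G.massAction κ x e)) ∧
    ((∀ k : Fin G'.m,
          ∑ e ∈ Finset.univ.filter (fun e => G'.tgt e = k), G.massAction κ x e =
            ∑ e ∈ Finset.univ.filter (fun e => G'.src e = k), G.massAction κ x e) ↔
      (∀ i : Fin (ℓ + 1), ∀ k : Fin G.m,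
          ∑ e ∈ Finset.univ.filter (fun e => part e = i ∧ G.tgt e = k),
              G.massAction κ x e =
            ∑ e ∈ Finset.univ.filter (fun e => part e = i ∧ G.src e = k),
              G.massAction κ x e)) :=
  decomposition_node_balanced_general G G' part φ hs ht hblock hsep κ x
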